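/- As formal power series over ℚ, 7·(x^7;x^7)_∞^3/(x;x)_∞^4 = 7·∑_{n≥0} B_n(1!·d_1, …, n!·d_n) x^n/n!, where B_n denotes the n-th complete exponential Bell polynomial and for n = 7^m·n' with m ≥ 0 and 7 ∤ n', d_n = (σ(n)/n)·(1 + 18/(7^{m+1} − 1)). -/

import Mathlib

noncomputable section

/-- `sigma' n` is the sum of all positive divisors of `n` (including `1` and `n`). -/
def sigma' (n : ℕ) : ℕ := ∑ d ∈ n.divisors, d

/-- The q-Pochhammer symbol `(x^r; x^r)_∞ = ∏_{k≥1} (1 − x^{r·k})` as a formal power series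
over `ℚ`.  The factor for index `k` only affects coefficients of degree `≥ r·k`, so the `n`-th
coefficient of the infinite product equals that of the finite product over `k = 1, …, n+1`. -/
def pochhammerPS (r : ℕ) : PowerSeries ℚ :=
  PowerSeries.mk fun n =>
    PowerSeries.coeff (R := ℚ) n
      (∏ k ∈ Finset.range (n + 1), (1 - (PowerSeries.X : PowerSeries ℚ) ^ (r * (k + 1))))

/-- The formal logarithm of a power series with constant coefficient `1`:
`log f = −∑_{k≥1} (1 − f)^k / k`.  Since `1 − f` has zero constant term, `(1 − f)^k` does not
contribute to the `n`-th coefficient when `k > n` (and the `k = 0` term vanishes since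
division by zero is zero). -/
def logPS (f : PowerSeries ℚ) : PowerSeries ℚ :=
  PowerSeries.mk fun n =>
    - ∑ k ∈ Finset.range (n + 1), PowerSeries.coeff (R := ℚ) n ((1 - f) ^ k) / (k : ℚ)

/-- The formal exponential of a power series with constant coefficient `0`:
`exp f = ∑_{k≥0} f^k / k!`.  Since `f` has zero constant term, `f^k` does not contribute to
the `n`-th coefficient when `k > n`. -/
def expPS (f : PowerSeries ℚ) : PowerSeries ℚ :=
  PowerSeries.mk fun n =>
    ∑ k ∈ Finset.range (n + 1), PowerSeries.coeff (R := ℚ) n (f ^ k) / (Nat.factorial k : ℚ)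

/-- The `n`-th complete exponential Bell polynomial evaluated at `(x_1, x_2, …)`, defined via
the generating identity `exp(∑_{m≥1} x_m t^m/m!) = ∑_{n≥0} B_n(x_1, …, x_n) t^n/n!`
(with `B_0 = 1`): `B_n(x_1, …, x_n)` is `n!` times the `n`-th coefficient of the left side. -/
def bellComplete (x : ℕ → ℚ) (n : ℕ) : ℚ :=
  (Nat.factorial n : ℚ) *
    PowerSeries.coeff (R := ℚ) n
      (expPS (PowerSeries.mk fun m => if m = 0 then 0 else x m / (Nat.factorial m : ℚ)))

open PowerSeries Finset
open scoped Nat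

/-!
Write `θ = X · d/dX`. Since `θ` is a derivation, solutions of `θ F = a F` multiply (adding the
`a`), and factor by factor `θ (x^r; x^r)_∞ = -S_r · (x^r; x^r)_∞` with `S_r = ∑ r σ(n/r) xⁿ` (sum over `r ∣ n`).
The right-hand side is `exp g` with `g = ∑ d_n xⁿ`, so `θ (exp g) = θ g · exp g`, and the
definition of `d_n` is exactly `n d_n = 4 σ(n) - 21 σ(n/7)` (the last term only when `7 ∣ n`),
i.e. `θ g = 4 S_1 - 3 S_7`.
Hence `(x^7; x^7)_∞³` and `exp g · (x; x)_∞⁴` both solve `θ F = -3 S_7 F` with `F(0) = 1`,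
and this first-order equation has a unique solution. The equation for the infinite product is
checked coefficientwise on its finite partial products.
-/

section EulerOperator

variable {R : Type*}

theorem coeff_X_mul_derivative [CommSemiring R] (f : R⟦X⟧) (n : ℕ) :
    coeff n (X * d⁄dX R f) = n * coeff n f := by
  cases n with
  | zero => simp
  | succ n => rw [coeff_succ_X_mul, coeff_derivative, mul_comm]; push_cast; rfl

theorem X_mul_derivative_mul [CommSemiring R] {f g a b : R⟦X⟧}
    (hf : X * d⁄dX R f = a * f) (hg : X * d⁄dX R g = b * g) :
    X * d⁄dX R (f * g) = (a + b) * (f * g) := by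
  calc X * d⁄dX R (f * g) = f * (X * d⁄dX R g) + g * (X * d⁄dX R f) := by
        rw [Derivation.leibniz, smul_eq_mul, smul_eq_mul]; ring
    _ = (a + b) * (f * g) := by rw [hf, hg]; ring

theorem X_mul_derivative_pow [CommSemiring R] {f a : R⟦X⟧}
    (hf : X * d⁄dX R f = a * f) (n : ℕ) :
    X * d⁄dX R (f ^ n) = ((n : R⟦X⟧) * a) * f ^ n := by
  induction n with
  | zero => simp
  | succ n ih => rw [pow_succ, X_mul_derivative_mul ih hf]; push_cast; ring

theorem X_mul_derivative_prod [CommSemiring R] {ι : Type*} (s : Finset ι) {f a : ι → R⟦X⟧}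
    (h : ∀ i ∈ s, X * d⁄dX R (f i) = a i * f i) :
    X * d⁄dX R (∏ i ∈ s, f i) = (∑ i ∈ s, a i) * ∏ i ∈ s, f i := by
  classical
  induction s using Finset.induction_on with
  | empty => simp
  | insert i s hi ih =>
    rw [prod_insert hi, sum_insert hi, X_mul_derivative_mul (h i (mem_insert_self i s))
      (ih fun j hj => h j (mem_insert_of_mem hj))]

theorem coeff_X_mul_derivative_sub_mul_congr [CommRing R] {f f₁ a a₁ : R⟦X⟧} {n : ℕ}
    (hf : ∀ i ≤ n, coeff i f = coeff i f₁) (ha : ∀ i ≤ n, coeff i a = coeff i a₁) :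
    coeff n (X * d⁄dX R f - a * f) = coeff n (X * d⁄dX R f₁ - a₁ * f₁) := by
  rw [map_sub, map_sub, coeff_X_mul_derivative, coeff_X_mul_derivative, coeff_mul, coeff_mul,
    hf n le_rfl]
  congr 1
  refine sum_congr rfl fun p hp => ?_
  have hp := mem_antidiagonal.mp hp
  rw [ha p.1 (by omega), hf p.2 (by omega)]

theorem eq_of_X_mul_derivative_eq [CommRing R] [IsAddTorsionFree R] {f g a : R⟦X⟧}
    (ha : constantCoeff a = 0) (hf : X * d⁄dX R f = a * f) (hg : X * d⁄dX R g = a * g)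
    (h0 : constantCoeff f = constantCoeff g) : f = g := by
  ext n
  refine Nat.strong_induction_on n fun n ih => ?_
  rcases Nat.eq_zero_or_pos n with rfl | hn
  · simpa using h0
  have hdvd : X ^ n ∣ f - g := X_pow_dvd_iff.mpr fun i hi => by rw [map_sub, ih i hi, sub_self]
  have hdvd' : X ^ (n + 1) ∣ X * d⁄dX R (f - g) := by
    rw [map_sub, mul_sub, hf, hg, ← mul_sub, pow_succ']
    exact mul_dvd_mul (X_dvd_iff.mpr ha) hdvd
  have := X_pow_dvd_iff.mp hdvd' n n.lt_succ_self
  rw [coeff_X_mul_derivative, map_sub, ← nsmul_eq_mul, smul_sub, sub_eq_zero] at this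
  exact nsmul_right_injective hn.ne' this

end EulerOperator

section Exponential

theorem coeff_pow_of_lt {R : Type*} [CommSemiring R] {g : R⟦X⟧} (hg : constantCoeff g = 0)
    {n k : ℕ} (h : n < k) : coeff n (g ^ k) = 0 :=
  X_pow_dvd_iff.mp (pow_dvd_pow_of_dvd (X_dvd_iff.mpr hg) k) n h

theorem expPS_eq_subst {g : ℚ⟦X⟧} (hg : constantCoeff g = 0) : expPS g = (exp ℚ).subst g := by
  ext n
  rw [expPS, coeff_mk, coeff_subst' (HasSubst.of_constantCoeff_zero' hg),
    finsum_eq_sum_of_support_subset (s := range (n + 1))]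
  · refine sum_congr rfl fun k _ => ?_
    simp [div_eq_inv_mul]
  · intro k hk
    by_contra hkn
    exact hk (by simp [coeff_pow_of_lt hg (show n < k by simpa using hkn)])

theorem constantCoeff_expPS (g : ℚ⟦X⟧) : constantCoeff (expPS g) = 1 := by
  rw [← coeff_zero_eq_constantCoeff_apply, expPS, coeff_mk]
  simp

theorem X_mul_derivative_expPS {g : ℚ⟦X⟧} (hg : constantCoeff g = 0) :
    X * d⁄dX ℚ (expPS g) = (X * d⁄dX ℚ g) * expPS g := by
  rw [expPS_eq_subst hg, derivative_subst (HasSubst.of_constantCoeff_zero' hg), derivative_exp]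
  ring

theorem bellComplete_factorial_mul_div_factorial (y : ℕ → ℚ) (n : ℕ) :
    bellComplete (fun m => (m ! : ℚ) * y m) n / n ! =
      coeff n (expPS (mk fun m => if m = 0 then 0 else y m)) := by
  rw [bellComplete, mul_div_cancel_left₀ _ (by positivity)]
  congr 3
  ext m
  split_ifs
  · rfl
  · field_simp

end Exponential

section Pochhammer

-- `X ^ s / (1 - X ^ s)`
def lambertTerm (R : Type*) [Semiring R] (s : ℕ) : R⟦X⟧ :=
  mk fun n => if s ∣ n ∧ n ≠ 0 then 1 else 0

theorem lambertTerm_eq {R : Type*} [CommRing R] {s : ℕ} (hs : s ≠ 0) :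
    lambertTerm R s = expand s hs (mk 1) - 1 := by
  ext n
  rw [lambertTerm, coeff_mk, map_sub, coeff_expand, coeff_one]
  by_cases hn : n = 0 <;> by_cases hsn : s ∣ n <;> simp [hn, hsn]

theorem X_mul_derivative_one_sub_X_pow {R : Type*} [CommRing R] {s : ℕ} (hs : s ≠ 0) :
    X * d⁄dX R (1 - X ^ s) = -((s : R⟦X⟧) * lambertTerm R s) * (1 - X ^ s) := by
  have hgeom : expand s hs (mk 1) * (1 - X ^ s) = (1 : R⟦X⟧) := by
    simpa [expand_X] using congrArg (expand s hs) (mk_one_mul_one_sub_eq_one R)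
  rw [lambertTerm_eq hs, map_sub, derivative_one, derivative_pow, derivative_X]
  linear_combination (s : R⟦X⟧) * hgeom - (s : R⟦X⟧) * mul_pow_sub_one hs (X : R⟦X⟧)

def partialPochhammer (r N : ℕ) : ℚ⟦X⟧ := ∏ k ∈ range N, (1 - X ^ (r * (k + 1)))

def partialLambertSeries (r N : ℕ) : ℚ⟦X⟧ :=
  ∑ k ∈ range N, ((r * (k + 1) : ℕ) : ℚ⟦X⟧) * lambertTerm ℚ (r * (k + 1))

-- the `n`-th coefficient is the sum of the divisors of `n` that are multiples of `r`
def sigmaSeries (r : ℕ) : ℚ⟦X⟧ := mk fun n => if r ∣ n then (r : ℚ) * sigma' (n / r) else 0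

theorem constantCoeff_sigmaSeries (r : ℕ) : constantCoeff (sigmaSeries r) = 0 := by
  rw [← coeff_zero_eq_constantCoeff_apply, sigmaSeries, coeff_mk]
  simp [sigma']

theorem coeff_partialPochhammer_succ {r N n : ℕ} (hr : 0 < r) (hn : n < N + 1) :
    coeff n (partialPochhammer r (N + 1)) = coeff n (partialPochhammer r N) := by
  have hlt : ¬ r * (N + 1) ≤ n := by nlinarith
  rw [partialPochhammer, prod_range_succ, mul_sub, mul_one, map_sub, coeff_mul_X_pow',
    if_neg hlt, sub_zero, partialPochhammer]

theorem coeff_pochhammerPS {r N n : ℕ} (hr : 0 < r) (hn : n < N) :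
    coeff n (pochhammerPS r) = coeff n (partialPochhammer r N) := by
  induction N, hn using Nat.le_induction with
  | base => rw [pochhammerPS, coeff_mk, partialPochhammer]
  | succ N hnN ih => rw [ih, coeff_partialPochhammer_succ hr (by omega)]

theorem constantCoeff_pochhammerPS {r : ℕ} (hr : 0 < r) : constantCoeff (pochhammerPS r) = 1 := by
  rw [← coeff_zero_eq_constantCoeff_apply, coeff_pochhammerPS hr zero_lt_one, partialPochhammer]
  simp [hr.ne']

theorem X_mul_derivative_partialPochhammer {r : ℕ} (hr : 0 < r) (N : ℕ) :
    X * d⁄dX ℚ (partialPochhammer r N) = -partialLambertSeries r N * partialPochhammer r N := by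
  rw [partialLambertSeries, ← sum_neg_distrib]
  exact X_mul_derivative_prod _ fun k _ => X_mul_derivative_one_sub_X_pow (by positivity)

theorem sum_range_dvd_eq_sigma' {M N : ℕ} (hM0 : M ≠ 0) (hM : M < N) :
    ∑ k ∈ range N, (if k + 1 ∣ M then ((k + 1 : ℕ) : ℚ) else 0) = sigma' M := by
  have hdiv : {j ∈ range (N + 1) | j ∣ M} = M.divisors := by
    ext j
    simp only [mem_filter, mem_range, Nat.mem_divisors]
    exact ⟨fun h => ⟨h.2, hM0⟩, fun h => ⟨by linarith [Nat.le_of_dvd (by omega) h.1], h.1⟩⟩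
  have := sum_filter (fun j => j ∣ M) (fun j => (j : ℚ)) (s := range (N + 1))
  rw [hdiv, sum_range_succ'] at this
  simp [sigma', this, hM0]

theorem coeff_partialLambertSeries {r N n : ℕ} (hr : 0 < r) (hn : n < N) :
    coeff n (partialLambertSeries r N) = coeff n (sigmaSeries r) := by
  simp only [partialLambertSeries, map_sum, ← map_natCast (C (R := ℚ)), coeff_C_mul, lambertTerm,
    coeff_mk, sigmaSeries]
  rcases eq_or_ne n 0 with rfl | hn0
  · simp [sigma']
  by_cases hrn : r ∣ n
  · obtain ⟨M, rfl⟩ := hrn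
    rw [if_pos (dvd_mul_right r M), Nat.mul_div_cancel_left M hr,
      ← sum_range_dvd_eq_sigma' (N := N) (by rintro rfl; simp at hn0) (by nlinarith), mul_sum]
    refine sum_congr rfl fun k _ => ?_
    simp only [Nat.mul_dvd_mul_iff_left hr, hn0, ne_eq, not_false_eq_true, and_true]
    split_ifs <;> push_cast <;> ring
  · rw [if_neg hrn]
    refine sum_eq_zero fun k _ => ?_
    rw [if_neg fun h => hrn (dvd_trans (dvd_mul_right r (k + 1)) h.1), mul_zero]

theorem X_mul_derivative_pochhammerPS {r : ℕ} (hr : 0 < r) :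
    X * d⁄dX ℚ (pochhammerPS r) = -sigmaSeries r * pochhammerPS r := by
  refine sub_eq_zero.mp (ext fun n => ?_)
  rw [coeff_X_mul_derivative_sub_mul_congr (f₁ := partialPochhammer r (n + 1))
      (a₁ := -partialLambertSeries r (n + 1))
      (fun i hi => coeff_pochhammerPS hr (Nat.lt_succ_of_le hi))
      (fun i hi => by rw [map_neg, map_neg, coeff_partialLambertSeries hr (Nat.lt_succ_of_le hi)]),
    X_mul_derivative_partialPochhammer hr, sub_self, map_zero]

end Pochhammer

section DivisorSums

open ArithmeticFunction

theorem six_mul_sigma'_seven_pow_mul {m n' : ℕ} (hn' : ¬ 7 ∣ n') :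
    6 * (sigma' (7 ^ m * n') : ℚ) = (7 ^ (m + 1) - 1) * sigma' n' := by
  have hcop : Nat.Coprime (7 ^ m) n' :=
    Nat.Coprime.pow_left _ ((Nat.Prime.coprime_iff_not_dvd (by norm_num)).mpr hn')
  simp only [sigma', ← sigma_one_apply]
  rw [isMultiplicative_sigma.map_mul_of_coprime hcop, sigma_one_apply_prime_pow (by norm_num)]
  push_cast
  linear_combination (sigma 1 n' : ℚ) * geom_sum_mul (7 : ℚ) (m + 1)

variable {d : ℕ → ℚ}
    (hd : ∀ m n' : ℕ, ¬ 7 ∣ n' →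
      d (7 ^ m * n') = ((sigma' (7 ^ m * n') : ℚ) / ((7 ^ m * n' : ℕ) : ℚ)) *
        (1 + 18 / (7 ^ (m + 1) - 1)))
include hd

theorem natCast_mul_eq_sigma' (n : ℕ) :
    n * d n = 4 * sigma' n - 3 * (if 7 ∣ n then 7 * sigma' (n / 7) else 0 : ℚ) := by
  rcases eq_or_ne n 0 with rfl | hn
  · simp [sigma']
  obtain ⟨m, n', hn', rfl⟩ := Nat.exists_eq_pow_mul_and_not_dvd hn 7 (by norm_num)
  have hσ := six_mul_sigma'_seven_pow_mul (m := m) hn'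
  -- `6 σ(7^m n') = (7^(m+1) - 1) σ(n')` turns the defining formula into `n d_n = σ(n) + 3 σ(n')`
  have hd' : ((7 ^ m * n' : ℕ) : ℚ) * d (7 ^ m * n') = sigma' (7 ^ m * n') + 3 * sigma' n' := by
    have h7 : (7 : ℚ) ^ (m + 1) - 1 ≠ 0 := by
      have : (7 : ℚ) ≤ 7 ^ (m + 1) := le_self_pow₀ (by norm_num) (by omega)
      linarith
    have hn : ((7 ^ m * n' : ℕ) : ℚ) ≠ 0 := by exact_mod_cast hn
    rw [hd m n' hn']
    field_simp
    linear_combination 3 * hσ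
  rw [hd']
  cases m with
  | zero =>
    rw [if_neg (by simpa using hn')]
    linear_combination -hσ / 2
  | succ k =>
    have hσ' := six_mul_sigma'_seven_pow_mul (m := k) hn'
    rw [if_pos (Dvd.intro (7 ^ k * n') (by ring)),
      show 7 ^ (k + 1) * n' / 7 = 7 ^ k * n' by
        rw [pow_succ', mul_assoc, Nat.mul_div_cancel_left _ (by norm_num)]]
    linear_combination -hσ / 2 + 7 * hσ' / 2

theorem X_mul_derivative_mk_eq_sigmaSeries :
    X * d⁄dX ℚ (mk fun m => if m = 0 then 0 else d m) = 4 * sigmaSeries 1 - 3 * sigmaSeries 7 := by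
  ext n
  rw [coeff_X_mul_derivative, coeff_mk, map_sub, ← map_ofNat C 4, ← map_ofNat C 3, coeff_C_mul,
    coeff_C_mul, sigmaSeries, sigmaSeries, coeff_mk, coeff_mk]
  rcases eq_or_ne n 0 with rfl | hn
  · simp [sigma']
  simpa [hn] using natCast_mul_eq_sigma' hd n

end DivisorSums

/-- As formal power series over `ℚ`,
`7·(x^7;x^7)_∞^3/(x;x)_∞^4 = 7·∑_{n≥0} B_n(1!·d_1, …, n!·d_n) x^n/n!`, where `B_n` is the
`n`-th complete exponential Bell polynomial and for `n = 7^m·n'` with `m ≥ 0` and `7 ∤ n'`,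
`d_n = (σ(n)/n)·(1 + 18/(7^(m+1) − 1))`. -/
theorem stmt10 (d : ℕ → ℚ)
    (hd : ∀ m n' : ℕ, ¬ 7 ∣ n' →
      d (7 ^ m * n') = ((sigma' (7 ^ m * n') : ℚ) / ((7 ^ m * n' : ℕ) : ℚ)) *
        (1 + 18 / (7 ^ (m + 1) - 1))) :
    7 * pochhammerPS 7 ^ 3 * (pochhammerPS 1 ^ 4)⁻¹ =
      7 * PowerSeries.mk (fun n =>
        bellComplete (fun m => (Nat.factorial m : ℚ) * d m) n / (Nat.factorial n : ℚ)) := by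
  have hg := X_mul_derivative_mk_eq_sigmaSeries hd
  set g : ℚ⟦X⟧ := mk fun m => if m = 0 then 0 else d m
  have hg0 : constantCoeff g = 0 := by rw [← coeff_zero_eq_constantCoeff_apply, coeff_mk]; simp
  have hP1 := X_mul_derivative_pochhammerPS one_pos
  have hP7 := X_mul_derivative_pochhammerPS (by norm_num : 0 < 7)
  have hA := X_mul_derivative_pow hP7 3
  have hB := X_mul_derivative_mul (X_mul_derivative_expPS hg0) (X_mul_derivative_pow hP1 4)
  rw [hg] at hB
  have hAB : pochhammerPS 7 ^ 3 = expPS g * pochhammerPS 1 ^ 4 := by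
    refine eq_of_X_mul_derivative_eq (by simp [constantCoeff_sigmaSeries]) hA (hB.trans ?_) ?_
    · push_cast; ring
    · simp [constantCoeff_expPS, constantCoeff_pochhammerPS]
  have hRHS : mk (fun n => bellComplete (fun m => (m ! : ℚ) * d m) n / n !) = expPS g :=
    ext fun n => by rw [coeff_mk, bellComplete_factorial_mul_div_factorial]
  rw [hRHS, hAB, mul_assoc, mul_assoc,
    PowerSeries.mul_inv_cancel _ (by simp [constantCoeff_pochhammerPS]), mul_one]
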